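/- arXiv:2506.10854 — 2 statements merged into one kernel-verified Lean document; each statement's English description precedes it below -/
import Mathlib

section
/- There exists a DAG G on n nodes and a capacity r = 3 such that OPT_PRBP(G, r) = O(1) (equal to the trivial cost of 8), while every S-partition of G in the sense of Hong and Kung with S = 2r = 6 has Θ(n) classes; hence the Hong–Kung S-partition lower bound r·(MIN_part(2r) − 1) does not apply to PRBP. -/
open scoped Classical

/-! ### Directed graphs / DAGs -/

structure DirGraph (V : Type) where
  E : V → V → Prop

namespace DirGraph

variable {V : Type}

def Acyclic (G : DirGraph V) : Prop := ∀ v, ¬ Relation.TransGen G.E v v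

def IsSource (G : DirGraph V) (v : V) : Prop := ∀ u, ¬ G.E u v

def IsSink (G : DirGraph V) (v : V) : Prop := ∀ u, ¬ G.E v u

def NoIsolated (G : DirGraph V) : Prop := ∀ v, (∃ u, G.E u v) ∨ (∃ u, G.E v u)

noncomputable def inDeg (G : DirGraph V) (v : V) : ℕ := {u | G.E u v}.ncard

noncomputable def outDeg (G : DirGraph V) (v : V) : ℕ := {u | G.E v u}.ncard

noncomputable def maxInDeg (G : DirGraph V) [Fintype V] : ℕ :=
  Finset.univ.sup G.inDeg

noncomputable def maxOutDeg (G : DirGraph V) [Fintype V] : ℕ :=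
  Finset.univ.sup G.outDeg

end DirGraph

/-! ### The (one-shot) red-blue pebble game (RBP) -/

structure RBPState (V : Type) where
  red : Finset V
  blue : Finset V
  computed : Finset V

inductive RBPMove (V : Type) where
  | save : V → RBPMove V
  | load : V → RBPMove V
  | compute : V → RBPMove V
  | delete : V → RBPMove V

def RBPMove.ioCost {V : Type} : RBPMove V → ℕ
  | .save _ => 1
  | .load _ => 1
  | _ => 0

variable {V : Type} [Fintype V] [DecidableEq V]

def RBPStep (G : DirGraph V) (r : ℕ) (s : RBPState V) :
    RBPMove V → RBPState V → Prop
  | .save v, t => v ∈ s.red ∧ t = { s with blue := insert v s.blue }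
  | .load v, t => v ∈ s.blue ∧ (insert v s.red).card ≤ r ∧
      t = { s with red := insert v s.red }
  | .compute v, t => ¬ G.IsSource v ∧ v ∉ s.computed ∧
      (∀ u, G.E u v → u ∈ s.red) ∧ (insert v s.red).card ≤ r ∧
      t = { s with red := insert v s.red, computed := insert v s.computed }
  | .delete v, t => v ∈ s.red ∧ t = { s with red := s.red.erase v }

inductive RBPReaches (G : DirGraph V) (r : ℕ) :
    RBPState V → List (RBPMove V) → RBPState V → Prop
  | nil (s : RBPState V) : RBPReaches G r s [] s
  | cons {s t u : RBPState V} {m : RBPMove V} {L : List (RBPMove V)} :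
      RBPStep G r s m t → RBPReaches G r t L u → RBPReaches G r s (m :: L) u

noncomputable def RBPInit (G : DirGraph V) : RBPState V :=
  ⟨∅, Finset.univ.filter (fun v => G.IsSource v), ∅⟩

def RBPValid (G : DirGraph V) (r : ℕ) (L : List (RBPMove V)) : Prop :=
  ∃ t, RBPReaches G r (RBPInit G) L t ∧ ∀ v, G.IsSink v → v ∈ t.blue

def RBPCost {V : Type} (L : List (RBPMove V)) : ℕ := (L.map RBPMove.ioCost).sum

noncomputable def optRBP (G : DirGraph V) (r : ℕ) : ℕ∞ :=
  sInf ((fun L => (RBPCost L : ℕ∞)) '' {L | RBPValid G r L})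

/-! ### The partial-computing red-blue pebble game (PRBP) -/

structure PRBPState (V : Type) where
  lred : Finset V
  dred : Finset V
  blue : Finset V
  marked : Finset (V × V)

def PRBPState.red (s : PRBPState V) : Finset V := s.lred ∪ s.dred

inductive PRBPMove (V : Type) where
  | save : V → PRBPMove V
  | load : V → PRBPMove V
  | pcompute : V → V → PRBPMove V
  | delete : V → PRBPMove V

def PRBPMove.ioCost {V : Type} : PRBPMove V → ℕ
  | .save _ => 1
  | .load _ => 1
  | _ => 0

def PRBPStep (G : DirGraph V) (r : ℕ) (s : PRBPState V) :
    PRBPMove V → PRBPState V → Prop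
  | .save v, t => v ∈ s.dred ∧
      t = { s with lred := insert v s.lred, dred := s.dred.erase v,
                   blue := insert v s.blue }
  | .load v, t => v ∈ s.blue ∧ ((insert v s.lred) ∪ s.dred).card ≤ r ∧
      t = { s with lred := insert v s.lred }
  | .pcompute u v, t => G.E u v ∧ (u, v) ∉ s.marked ∧
      (∀ w, G.E w u → (w, u) ∈ s.marked) ∧ u ∈ s.red ∧
      (v ∈ s.red ∨ (v ∉ s.red ∧ v ∉ s.blue)) ∧
      ((s.lred.erase v) ∪ (insert v s.dred)).card ≤ r ∧
      t = { s with lred := s.lred.erase v, dred := insert v s.dred,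
                   blue := s.blue.erase v, marked := insert (u, v) s.marked }
  | .delete v, t =>
      (v ∈ s.lred ∧ t = { s with lred := s.lred.erase v }) ∨
      (v ∈ s.dred ∧ (∀ w, G.E v w → (v, w) ∈ s.marked) ∧
        t = { s with dred := s.dred.erase v })

inductive PRBPReaches (G : DirGraph V) (r : ℕ) :
    PRBPState V → List (PRBPMove V) → PRBPState V → Prop
  | nil (s : PRBPState V) : PRBPReaches G r s [] s
  | cons {s t u : PRBPState V} {m : PRBPMove V} {L : List (PRBPMove V)} :
      PRBPStep G r s m t → PRBPReaches G r t L u → PRBPReaches G r s (m :: L) u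

noncomputable def PRBPInit (G : DirGraph V) : PRBPState V :=
  ⟨∅, ∅, Finset.univ.filter (fun v => G.IsSource v), ∅⟩

def PRBPValid (G : DirGraph V) (r : ℕ) (L : List (PRBPMove V)) : Prop :=
  ∃ t, PRBPReaches G r (PRBPInit G) L t ∧ (∀ v, G.IsSink v → v ∈ t.blue) ∧
    ∀ u v, G.E u v → (u, v) ∈ t.marked

def PRBPCost {V : Type} (L : List (PRBPMove V)) : ℕ := (L.map PRBPMove.ioCost).sum

noncomputable def optPRBP (G : DirGraph V) (r : ℕ) : ℕ∞ :=
  sInf ((fun L => (PRBPCost L : ℕ∞)) '' {L | PRBPValid G r L})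

/-- `s` is a state reached by some prefix of the pebbling `L`. -/
def PRBPPrefixState (G : DirGraph V) (r : ℕ) (L : List (PRBPMove V))
    (s : PRBPState V) : Prop :=
  ∃ L₁ L₂, L = L₁ ++ L₂ ∧ PRBPReaches G r (PRBPInit G) L₁ s

/-! ### Paths, dominators, S-partitions -/

/-- A directed path in `G` starting at a source node. -/
def IsSourcePath (G : DirGraph V) (p : List V) : Prop :=
  p ≠ [] ∧ p.Chain' G.E ∧ ∀ h : p ≠ [], G.IsSource (p.head h)

/-- `D` is a dominator for the node set `V₀`. -/
def Dominates (G : DirGraph V) (D : Set V) (V₀ : Set V) : Prop :=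
  ∀ p : List V, IsSourcePath G p → ∀ h : p ≠ [], p.getLast h ∈ V₀ →
    ∃ d ∈ D, d ∈ p

/-- The path `p` contains an edge of `E₀` (two consecutive nodes forming it). -/
def PathContainsEdge (p : List V) (E₀ : Set (V × V)) : Prop :=
  ∃ u v, (u, v) ∈ E₀ ∧ [u, v] <:+: p

/-- `D` is an edge-dominator for the edge set `E₀`. -/
def EdgeDominates (G : DirGraph V) (D : Set V) (E₀ : Set (V × V)) : Prop :=
  ∀ p : List V, IsSourcePath G p → PathContainsEdge p E₀ → ∃ d ∈ D, d ∈ p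

/-- The terminal set of a node set `V₀`: nodes of `V₀` with no out-neighbor in `V₀`. -/
def terminalSet (G : DirGraph V) (V₀ : Set V) : Set V :=
  {v | v ∈ V₀ ∧ ∀ w, G.E v w → w ∉ V₀}

/-- The edge-terminal set of an edge set `E₀`. -/
def edgeTerminalSet (E₀ : Set (V × V)) : Set V :=
  {v | (∃ u, (u, v) ∈ E₀) ∧ ∀ w, (v, w) ∉ E₀}

/-- An `S`-partition of the DAG `G` (Hong–Kung). -/
def IsSPartition (G : DirGraph V) (S : ℕ) (k : ℕ) (P : Fin k → Set V) : Prop :=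
  (∀ v : V, ∃! i, v ∈ P i) ∧
  (∀ i j : Fin k, j < i → ∀ u v, u ∈ P i → v ∈ P j → ¬ G.E u v) ∧
  (∀ i, ∃ D : Set V, D.ncard ≤ S ∧ Dominates G D (P i)) ∧
  (∀ i, (terminalSet G (P i)).ncard ≤ S)

/-- An `S`-dominator partition of the DAG `G`: an `S`-partition without the
terminal-set condition. -/
def IsSDomPartition (G : DirGraph V) (S : ℕ) (k : ℕ) (P : Fin k → Set V) : Prop :=
  (∀ v : V, ∃! i, v ∈ P i) ∧
  (∀ i j : Fin k, j < i → ∀ u v, u ∈ P i → v ∈ P j → ¬ G.E u v) ∧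
  (∀ i, ∃ D : Set V, D.ncard ≤ S ∧ Dominates G D (P i))

/-- An `S`-edge partition of the DAG `G`. -/
def IsSEdgePartition (G : DirGraph V) (S : ℕ) (k : ℕ)
    (P : Fin k → Set (V × V)) : Prop :=
  (∀ i, P i ⊆ {e | G.E e.1 e.2}) ∧
  (∀ u v, G.E u v → ∃! i, (u, v) ∈ P i) ∧
  (∀ i j : Fin k, i < j → ∀ u v w, G.E u v → G.E v w →
      ¬ ((v, w) ∈ P i ∧ (u, v) ∈ P j)) ∧
  (∀ i, ∃ D : Set V, D.ncard ≤ S ∧ EdgeDominates G D (P i)) ∧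
  (∀ i, (edgeTerminalSet (P i)).ncard ≤ S)

noncomputable def minEdgePartition (G : DirGraph V) (S : ℕ) : ℕ :=
  sInf {k | ∃ P : Fin k → Set (V × V), IsSEdgePartition G S k P}

noncomputable def minDomPartition (G : DirGraph V) (S : ℕ) : ℕ :=
  sInf {k | ∃ P : Fin k → Set V, IsSDomPartition G S k P}

noncomputable def minSPartition (G : DirGraph V) (S : ℕ) : ℕ :=
  sInf {k | ∃ P : Fin k → Set V, IsSPartition G S k P}

/-!
In the broom `u_i → H_i → v`, three pebbles suffice for PRBP: load `u_i`, and for each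
`h ∈ H_i` partially compute `h` from `u_i`, aggregate `h` into `v` and drop `h`; the only I/O
steps are the seven loads and the final save of `v`, which every pebbling needs anyway.
In an `S`-partition with `S = 6`, the dominator of the class of `v` misses one of the seven
disjoint groups `{u_i} ∪ H_i`, so no node of that `H_i` shares its class with `v`. Since `v`
is the only successor of each `h ∈ H_i`, every such `h` is terminal in its class, and terminal
sets of size at most `6` force at least `|H_i| / 6` classes.
-/

theorem DirGraph.acyclic_of_lt {α : Type} [Preorder α] {G : DirGraph α}
    (h : ∀ a b, G.E a b → a < b) : G.Acyclic := fun v hv => by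
  have hlt := Relation.transGen_eq_self (r := (· < · : α → α → Prop)) ▸
    Relation.TransGen.mono h v v hv
  exact lt_irrefl v hlt

theorem card_le_PRBPCost {α : Type} {L : List (PRBPMove α)} {M : Finset (PRBPMove α)}
    (hM : ∀ m ∈ M, m ∈ L ∧ m.ioCost = 1) : M.card ≤ PRBPCost L := by
  classical
  calc M.card = ∑ m ∈ M, m.ioCost := by
        rw [Finset.card_eq_sum_ones]
        exact Finset.sum_congr rfl fun m hm => (hM m hm).2.symm
    _ ≤ ∑ m ∈ L.toFinset, m.ioCost :=
        Finset.sum_le_sum_of_subset fun m hm => List.mem_toFinset.2 (hM m hm).1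
    _ ≤ ∑ m ∈ L.toFinset, L.count m • m.ioCost :=
        Finset.sum_le_sum fun m hm => by
          rw [smul_eq_mul]
          exact Nat.le_mul_of_pos_left _ (List.count_pos_iff.2 (List.mem_toFinset.1 hm))
    _ = PRBPCost L := (Finset.sum_list_map_count L _).symm

section PRBP

variable {α : Type} [DecidableEq α] {G : DirGraph α} {r : ℕ}

theorem PRBPReaches.append {s t u : PRBPState α} {L₁ L₂ : List (PRBPMove α)}
    (h₁ : PRBPReaches G r s L₁ t) (h₂ : PRBPReaches G r t L₂ u) :
    PRBPReaches G r s (L₁ ++ L₂) u := by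
  induction h₁ with
  | nil => exact h₂
  | cons hs _ ih => exact .cons hs (ih h₂)

theorem PRBPReaches.flatMap {β : Type} [DecidableEq β] (σ : Finset β → PRBPState α)
    (f : β → List (PRBPMove α))
    (hf : ∀ b T, b ∉ T → PRBPReaches G r (σ T) (f b) (σ (insert b T))) {l : List β}
    (hl : l.Nodup) {T : Finset β} (hT : ∀ b ∈ l, b ∉ T) :
    PRBPReaches G r (σ T) (l.flatMap f) (σ (l.toFinset ∪ T)) := by
  induction l generalizing T with
  | nil => simpa using PRBPReaches.nil (σ T)
  | cons b l ih =>
    obtain ⟨hbl, hl⟩ := List.nodup_cons.1 hl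
    have hrest := ih hl fun c hc => Finset.mem_insert.not.2 <|
      not_or.2 ⟨ne_of_mem_of_not_mem hc hbl, hT c (List.mem_cons_of_mem b hc)⟩
    rw [List.flatMap_cons, List.toFinset_cons, Finset.insert_union, ← Finset.union_insert]
    exact (hf b T (hT b List.mem_cons_self)).append hrest

theorem PRBPStep.untouched_of_ne_load {s t : PRBPState α} {m : PRBPMove α}
    (h : PRBPStep G r s m t) {u : α} (hu : G.IsSource u) (hm : m ≠ .load u)
    (hs : u ∉ s.red ∧ ∀ b, (u, b) ∉ s.marked) : u ∉ t.red ∧ ∀ b, (u, b) ∉ t.marked := by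
  obtain ⟨hred, hmarked⟩ := hs
  simp only [PRBPState.red, Finset.mem_union, not_or] at hred ⊢
  cases m with
  | save v =>
    obtain ⟨hv, rfl⟩ := h
    have : u ≠ v := by rintro rfl; exact hred.2 hv
    simp_all
  | load v => obtain ⟨-, -, rfl⟩ := h; simp_all [eq_comm]
  | pcompute v w =>
    obtain ⟨hvw, -, -, hv, -, -, rfl⟩ := h
    have huw : u ≠ w := by rintro rfl; exact hu v hvw
    have huv : u ≠ v := by rintro rfl; simp_all [PRBPState.red]
    simp_all
  | delete v => obtain ⟨-, rfl⟩ | ⟨-, -, rfl⟩ := h <;> simp_all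

theorem PRBPReaches.untouched_of_load_notMem {s t : PRBPState α} {L : List (PRBPMove α)}
    (h : PRBPReaches G r s L t) {u : α} (hu : G.IsSource u) (hL : .load u ∉ L)
    (hs : u ∉ s.red ∧ ∀ b, (u, b) ∉ s.marked) : u ∉ t.red ∧ ∀ b, (u, b) ∉ t.marked := by
  induction h with
  | nil => exact hs
  | cons hstep _ ih =>
    rw [List.mem_cons, not_or] at hL
    exact ih hL.2 (hstep.untouched_of_ne_load hu (Ne.symm hL.1) hs)

theorem PRBPStep.notMem_blue_of_ne_save {s t : PRBPState α} {m : PRBPMove α}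
    (h : PRBPStep G r s m t) {v : α} (hm : m ≠ .save v) (hs : v ∉ s.blue) : v ∉ t.blue := by
  cases m with
  | save w => obtain ⟨-, rfl⟩ := h; simp_all [eq_comm]
  | load w => obtain ⟨-, -, rfl⟩ := h; exact hs
  | pcompute w x => obtain ⟨-, -, -, -, -, -, rfl⟩ := h; simp_all
  | delete w => obtain ⟨-, rfl⟩ | ⟨-, -, rfl⟩ := h <;> exact hs

theorem PRBPReaches.notMem_blue_of_save_notMem {s t : PRBPState α} {L : List (PRBPMove α)}
    (h : PRBPReaches G r s L t) {v : α} (hL : .save v ∉ L) (hs : v ∉ s.blue) : v ∉ t.blue := by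
  induction h with
  | nil => exact hs
  | cons hstep _ ih =>
    rw [List.mem_cons, not_or] at hL
    exact ih hL.2 (hstep.notMem_blue_of_ne_save (Ne.symm hL.1) hs)

theorem PRBPValid.card_add_card_le_cost [Fintype α] {L : List (PRBPMove α)}
    (hL : PRBPValid G r L) {A B : Finset α} (hA : ∀ u ∈ A, G.IsSource u ∧ ∃ v, G.E u v)
    (hB : ∀ v ∈ B, G.IsSink v ∧ ¬ G.IsSource v) : A.card + B.card ≤ PRBPCost L := by
  obtain ⟨t, hreach, hsink, hmarked⟩ := hL
  have hload : ∀ u ∈ A, .load u ∈ L := fun u hu => by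
    obtain ⟨hsrc, v, huv⟩ := hA u hu
    by_contra hL
    refine (hreach.untouched_of_load_notMem hsrc hL ?_).2 v (hmarked u v huv)
    simp [PRBPInit, PRBPState.red]
  have hsave : ∀ v ∈ B, .save v ∈ L := fun v hv => by
    by_contra hL
    refine hreach.notMem_blue_of_save_notMem hL ?_ (hsink v (hB v hv).1)
    simp [PRBPInit, (hB v hv).2]
  calc A.card + B.card = (A.image .load ∪ B.image .save).card := by
        rw [Finset.card_union_of_disjoint (by simp [Finset.disjoint_left]),
          Finset.card_image_of_injective _ fun _ _ => PRBPMove.load.inj,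
          Finset.card_image_of_injective _ fun _ _ => PRBPMove.save.inj]
    _ ≤ PRBPCost L := card_le_PRBPCost <| by
        simp only [Finset.mem_union, Finset.mem_image]
        rintro m (⟨u, hu, rfl⟩ | ⟨v, hv, rfl⟩)
        exacts [⟨hload u hu, rfl⟩, ⟨hsave v hv, rfl⟩]

end PRBP

theorem Set.exists_disjoint_of_ncard_lt {α ι : Type} [Finite α] {F : ι → Set α}
    (hF : Pairwise (Function.onFun Disjoint F)) {D : Set α} (hD : D.ncard < Nat.card ι) :
    ∃ i, Disjoint D (F i) := by
  by_contra! h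
  choose f hfD hfF using fun i => Set.not_disjoint_iff.1 (h i)
  have hf : Function.Injective fun i => (⟨f i, hfD i⟩ : D) := fun i j hij => by
    have : f i = f j := congrArg Subtype.val hij
    exact hF.eq (Set.not_disjoint_iff.2 ⟨f i, hfF i, this ▸ hfF j⟩)
  have := Nat.card_le_card_of_injective _ hf
  rw [Nat.card_coe_set_eq] at this
  omega

section Partition

variable {α : Type} {G : DirGraph α}

theorem Dominates.mem_or_mem_of_isSource {D C : Set α} (hD : Dominates G D C) {u v : α}
    (hu : G.IsSource u) (huv : G.E u v) (hv : v ∈ C) : u ∈ D ∨ v ∈ D := by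
  obtain ⟨d, hd, hdp⟩ := hD [u, v] ⟨by simp, List.isChain_pair.2 huv, fun _ => hu⟩ (by simp) hv
  rcases List.mem_pair.1 hdp with rfl | rfl
  exacts [.inl hd, .inr hd]

theorem IsSPartition.ncard_le_of_forall_mem_terminalSet [Finite α] {S k : ℕ}
    {P : Fin k → Set α} (hP : IsSPartition G S k P) {T : Set α}
    (hT : ∀ x ∈ T, ∀ c, x ∈ P c → x ∈ terminalSet G (P c)) : T.ncard ≤ k * S :=
  calc T.ncard ≤ (⋃ c, terminalSet G (P c)).ncard := by
        refine Set.ncard_le_ncard (fun x hx => ?_) (Set.toFinite _)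
        obtain ⟨c, hc, -⟩ := hP.1 x
        exact Set.mem_iUnion.2 ⟨c, hT x hx c hc⟩
    _ ≤ ∑ c, (terminalSet G (P c)).ncard := Set.ncard_iUnion_le_of_fintype _
    _ ≤ ∑ _c : Fin k, S := Finset.sum_le_sum fun c _ => hP.2.2.2 c
    _ = k * S := by simp

end Partition

theorem isSPartition_singleton {n S : ℕ} {G : DirGraph (Fin n)} (hG : ∀ u v, G.E u v → u < v)
    (hS : 1 ≤ S) : IsSPartition G S n fun j => {j} := by
  refine ⟨fun v => ⟨v, rfl, fun j hj => hj.symm⟩, ?_, fun i => ⟨{i}, ?_, ?_⟩, fun i => ?_⟩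
  · rintro i j hji u v rfl rfl huv
    exact lt_asymm (hG u v huv) hji
  · simpa using hS
  · exact fun p _ hp hlast => ⟨i, rfl, hlast ▸ List.getLast_mem hp⟩
  · exact (Set.ncard_le_ncard (fun x hx => hx.1) (Set.toFinite _)).trans (by simpa using hS)

/-- The broom: sources `src i`, the group `H_i` of middle nodes `mid i t`, and the sink. -/
abbrev BroomNode (ι κ : Type) := ι ⊕ (ι × κ) ⊕ Unit

namespace Broom

variable {ι κ α : Type}

abbrev src (i : ι) : BroomNode ι κ := .inl i

abbrev mid (i : ι) (t : κ) : BroomNode ι κ := .inr (.inl (i, t))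

abbrev sink : BroomNode ι κ := .inr (.inr ())

inductive Adj : BroomNode ι κ → BroomNode ι κ → Prop
  | src_mid (i : ι) (t : κ) : Adj (src i) (mid i t)
  | mid_sink (i : ι) (t : κ) : Adj (mid i t) sink

def graph (e : BroomNode ι κ ≃ α) : DirGraph α := ⟨fun a b => Adj (e.symm a) (e.symm b)⟩

def groupOf : BroomNode ι κ → Option ι :=
  Sum.elim some (Sum.elim (some ∘ Prod.fst) fun _ => none)

variable (e : BroomNode ι κ ≃ α)

@[simp]
theorem graph_E {x y : BroomNode ι κ} : (graph e).E (e x) (e y) ↔ Adj x y := by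
  simp [graph]

theorem isSource_src (i : ι) : (graph e).IsSource (e (src i)) := fun a h => by
  obtain ⟨x, rfl⟩ := e.surjective a
  cases (graph_E e).1 h

theorem isSink_sink : (graph e).IsSink (e sink) := fun b h => by
  obtain ⟨y, rfl⟩ := e.surjective b
  cases (graph_E e).1 h

theorem not_isSource_of_adj {x y : BroomNode ι κ} (h : Adj x y) :
    ¬ (graph e).IsSource (e y) :=
  fun hy => hy (e x) ((graph_E e).2 h)

theorem eq_src_of_E_mid {a : α} {i : ι} {t : κ} (h : (graph e).E a (e (mid i t))) :
    a = e (src i) := by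
  obtain ⟨x, rfl⟩ := e.surjective a
  cases (graph_E e).1 h
  rfl

theorem eq_sink_of_E_mid {b : α} {i : ι} {t : κ} (h : (graph e).E (e (mid i t)) b) :
    b = e sink := by
  obtain ⟨y, rfl⟩ := e.surjective b
  cases (graph_E e).1 h
  rfl

theorem card_le_of_isSPartition [Finite α] {S k : ℕ} {P : Fin k → Set α}
    (hP : IsSPartition (graph e) S k P) (hS : S < Nat.card ι) : Nat.card κ ≤ k * S := by
  obtain ⟨c₀, hc₀, -⟩ := hP.1 (e sink)
  obtain ⟨D, hDS, hD⟩ := hP.2.2.1 c₀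
  obtain ⟨i, hi⟩ := Set.exists_disjoint_of_ncard_lt
    (F := fun i => {a | groupOf (e.symm a) = some i})
    (fun i j hij => Set.disjoint_left.2 fun a hai haj =>
      hij (Option.some_inj.1 (hai.symm.trans haj)))
    (lt_of_le_of_lt hDS hS)
  have hmid : Function.Injective (e ∘ mid i : κ → α) :=
    e.injective.comp fun t t' h => by simpa using h
  have hterm : ∀ x ∈ Set.range (e ∘ mid i), ∀ c, x ∈ P c → x ∈ terminalSet (graph e) (P c) := by
    rintro _ ⟨t, rfl⟩ c hc
    refine ⟨hc, fun w hw hwc => ?_⟩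
    rw [eq_sink_of_E_mid e hw] at hwc
    obtain rfl := (hP.1 (e sink)).unique hwc hc₀
    rcases hD.mem_or_mem_of_isSource (isSource_src e i) ((graph_E e).2 (.src_mid i t)) hc
      with h | h
    all_goals exact Set.disjoint_left.1 hi h (by simp [groupOf])
  simpa [Set.ncard_range_of_injective hmid] using
    hP.ncard_le_of_forall_mem_terminalSet hterm

def aggregate (i : ι) (t : κ) : List (PRBPMove α) :=
  [.pcompute (e (src i)) (e (mid i t)), .pcompute (e (mid i t)) (e sink), .delete (e (mid i t))]

noncomputable def sweep [Fintype κ] (i : ι) : List (PRBPMove α) :=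
  .load (e (src i)) :: (Finset.univ.toList.flatMap (aggregate e i) ++ [.delete (e (src i))])

noncomputable def pebbling [Fintype ι] [Fintype κ] : List (PRBPMove α) :=
  Finset.univ.toList.flatMap (sweep e) ++ [.save (e sink)]

theorem PRBPCost_pebbling [Fintype ι] [Fintype κ] :
    PRBPCost (pebbling e) = Fintype.card ι + 1 := by
  simp [pebbling, sweep, aggregate, PRBPCost, PRBPMove.ioCost, List.flatMap, List.map_flatten,
    List.sum_flatten, Function.comp_def]

section Pebbling

variable [Fintype α] [DecidableEq α]

/-- The state while the source pebble `R` is in play, once the middle nodes `D` have been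
aggregated into the sink (which carries a dark-red pebble from the first aggregation on). -/
noncomputable def state (R : Finset α) (D : Finset (ι × κ)) : PRBPState α where
  lred := R
  dred := if D = ∅ then ∅ else {e sink}
  blue := (PRBPInit (graph e)).blue
  marked := D.biUnion fun p => {(e (src p.1), e (mid p.1 p.2)), (e (mid p.1 p.2), e sink)}

theorem reaches_aggregate {D : Finset (ι × κ)} {i : ι} {t : κ} (hD : (i, t) ∉ D) :
    PRBPReaches (graph e) 3 (state e {e (src i)} D) (aggregate e i t)
      (state e {e (src i)} (insert (i, t) D)) := by
  have hmid : e (mid i t) ∉ (PRBPInit (graph e)).blue := by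
    simpa [PRBPInit] using not_isSource_of_adj e (.src_mid i t)
  have hsink : e sink ∉ (PRBPInit (graph e)).blue := by
    simpa [PRBPInit] using not_isSource_of_adj e (.mid_sink i t)
  have hdred : (state e {e (src i)} D).dred ⊆ {e sink} := by
    simp only [state]; split_ifs <;> simp
  have hcard : ∀ X : Finset α, X ⊆ {e (src i), e (mid i t), e sink} → X.card ≤ 3 :=
    fun X hX => (Finset.card_le_card hX).trans Finset.card_le_three
  refine .cons ⟨(graph_E e).2 (.src_mid i t), by simp [state, hD],
    fun w hw => (isSource_src e i w hw).elim, by simp [state, PRBPState.red],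
    (em _).imp_right (⟨·, hmid⟩), hcard _ ?_, rfl⟩
    (.cons ⟨(graph_E e).2 (.mid_sink i t), by simp [state, hD],
      fun w hw => by simp [eq_src_of_E_mid e hw], by simp [PRBPState.red],
      (em _).imp_right (⟨·, fun h => hsink (Finset.mem_of_mem_erase h)⟩), hcard _ ?_, rfl⟩
    (.cons (.inr ⟨by simp, fun w hw => by simp [eq_sink_of_E_mid e hw], ?_⟩) (.nil _)))
  · exact Finset.union_subset (fun x hx => by simp_all [state])
      (Finset.insert_subset (by simp) (hdred.trans (by simp)))
  · exact Finset.union_subset (fun x hx => by simp_all [state])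
      (Finset.insert_subset (by simp) (Finset.insert_subset (by simp) (hdred.trans (by simp))))
  · simp only [state, PRBPState.mk.injEq]
    refine ⟨by simp, ?_, ?_, ?_⟩
    · have hne : e (mid i t) ≠ e sink := by simp
      ext x
      split_ifs <;> simp only [Finset.mem_erase, Finset.mem_insert, Finset.mem_singleton,
        Finset.notMem_empty] <;> grind
    · rw [Finset.erase_eq_of_notMem hmid, Finset.erase_eq_of_notMem hsink]
    · simp only [Finset.biUnion_insert]
      ext x
      simp only [Finset.mem_union, Finset.mem_insert, Finset.mem_singleton]
      tauto

theorem reaches_sweep [Fintype κ] {I : Finset ι} {i : ι} (hi : i ∉ I) :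
    PRBPReaches (graph e) 3 (state e ∅ (I ×ˢ Finset.univ)) (sweep e i)
      (state e ∅ (insert i I ×ˢ Finset.univ)) := by
  have hinner := PRBPReaches.flatMap (G := graph e) (r := 3)
    (fun T => state e {e (src i)} (I ×ˢ Finset.univ ∪ {i} ×ˢ T)) (aggregate e i)
    (fun t T ht => by
      simpa [Finset.union_insert] using reaches_aggregate e (i := i) (t := t)
        (D := I ×ˢ Finset.univ ∪ {i} ×ˢ T) (by simp [hi, ht]))
    (Finset.nodup_toList Finset.univ) (T := ∅) (by simp)
  rw [Finset.product_empty, Finset.union_empty, Finset.union_empty, Finset.toList_toFinset]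
    at hinner
  refine .cons ⟨by simp [state, PRBPInit, isSource_src], ?_, by simp [state]⟩
    (hinner.append (.cons (.inl ⟨by simp [state], ?_⟩) (.nil _)))
  · simp only [state]
    split_ifs <;> simp
  · rw [Finset.insert_eq, Finset.union_comm, Finset.union_product]
    simp [state]

theorem pebbling_valid [Fintype ι] [Fintype κ] [Nonempty ι] [Nonempty κ] :
    PRBPValid (graph e) 3 (pebbling e) := by
  have hsweeps := PRBPReaches.flatMap (G := graph e) (r := 3)
    (fun I => state e ∅ (I ×ˢ Finset.univ)) (sweep e) (fun i I hi => reaches_sweep e hi)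
    (Finset.nodup_toList Finset.univ) (T := ∅) (by simp)
  rw [Finset.union_empty, Finset.toList_toFinset, Finset.univ_product_univ] at hsweeps
  have hinit : state e ∅ (∅ ×ˢ Finset.univ) = PRBPInit (graph e) := by
    simp [state, PRBPInit]
  rw [hinit] at hsweeps
  refine ⟨_, hsweeps.append
    (.cons ⟨by simp [state, Finset.univ_nonempty.ne_empty], rfl⟩ (.nil _)), ?_, ?_⟩
  · intro v hv
    obtain ⟨x, rfl⟩ := e.surjective v
    rcases x with i | ⟨i, t⟩ | ⟨⟩
    · simp [state, PRBPInit, isSource_src]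
    · exact (hv _ ((graph_E e).2 (.mid_sink i t))).elim
    · exact Finset.mem_insert_self _ _
  · intro u v huv
    obtain ⟨x, rfl⟩ := e.surjective u
    obtain ⟨y, rfl⟩ := e.surjective v
    cases (graph_E e).1 huv <;> simp [state]

theorem optPRBP_graph [Fintype ι] [Fintype κ] [Nonempty ι] [Nonempty κ] :
    optPRBP (graph e) 3 = ((Fintype.card ι + 1 : ℕ) : ℕ∞) := by
  refine le_antisymm
    (sInf_le ⟨pebbling e, pebbling_valid e, congrArg Nat.cast (PRBPCost_pebbling e)⟩)
    (le_sInf ?_)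
  rintro _ ⟨L, hL, rfl⟩
  have t₀ : κ := Classical.arbitrary κ
  have hcost := hL.card_add_card_le_cost (A := Finset.univ.image (e ∘ src)) (B := {e sink})
    (by simpa using fun i => ⟨isSource_src e i, _, (graph_E e).2 (.src_mid i t₀)⟩)
    (by simpa using ⟨isSink_sink e,
      not_isSource_of_adj e (.mid_sink (Classical.arbitrary ι) t₀)⟩)
  rw [Finset.card_image_of_injective _ (e.injective.comp Sum.inl_injective),
    Finset.card_univ, Finset.card_singleton] at hcost
  exact Nat.cast_le.2 hcost

end Pebbling

def finEquiv (a b : ℕ) : BroomNode (Fin a) (Fin b) ≃ Fin (a + (a * b + 1)) :=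
  (Equiv.sumCongr (Equiv.refl _)
    ((Equiv.sumCongr finProdFinEquiv finOneEquiv.symm).trans finSumFinEquiv)).trans finSumFinEquiv

theorem finEquiv_lt_of_adj {a b : ℕ} {x y : BroomNode (Fin a) (Fin b)} (h : Adj x y) :
    finEquiv a b x < finEquiv a b y := by
  cases h with
  | src_mid i t => simpa [finEquiv, Fin.lt_def] using Nat.lt_add_right _ i.isLt
  | mid_sink i t => simp [finEquiv, Fin.lt_def, -finProdFinEquiv_apply_val]

theorem lt_of_graph_finEquiv {a b : ℕ} {u v : Fin (a + (a * b + 1))}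
    (h : (graph (finEquiv a b)).E u v) : u < v := by
  simpa using finEquiv_lt_of_adj h

end Broom

/-- there is a family of DAGs (of strictly growing sizes `f k`)
such that with `r = 3` the optimal PRBP cost is the constant `8` (the trivial
cost), while every Hong–Kung S-partition with `S = 2r = 6` has `Θ(n)` classes;
hence the Hong–Kung S-partition lower bound `r·(MIN_part(2r) − 1)` fails for PRBP. -/
theorem spartition_bound_fails_for_prbp :
    ∃ (f : ℕ → ℕ) (G : (k : ℕ) → DirGraph (Fin (f k))),
      StrictMono f ∧ (∀ k, (G k).Acyclic) ∧
      (∀ k, optPRBP (G k) 3 = ((8 : ℕ) : ℕ∞)) ∧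
      ∃ c₁ c₂ : ℕ, 0 < c₁ ∧ 0 < c₂ ∧
        ∀ k, (∀ (i : ℕ) (P : Fin i → Set (Fin (f k))),
            IsSPartition (G k) 6 i P → f k ≤ c₁ * i) ∧
          (∃ (i : ℕ) (P : Fin i → Set (Fin (f k))),
            IsSPartition (G k) 6 i P ∧ i ≤ c₂ * f k) := by
  refine ⟨fun k => 7 + (7 * (k + 1) + 1), fun k => Broom.graph (Broom.finEquiv 7 (k + 1)),
    fun a b hab => by simp only; omega,
    fun k => DirGraph.acyclic_of_lt fun _ _ => Broom.lt_of_graph_finEquiv,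
    fun k => by simpa using Broom.optPRBP_graph (Broom.finEquiv 7 (k + 1)), 50, 1, by norm_num,
    by norm_num, fun k => ⟨fun i P hP => ?_, _, _,
      isSPartition_singleton (fun _ _ => Broom.lt_of_graph_finEquiv) (by norm_num), by simp⟩⟩
  have hgroup := Broom.card_le_of_isSPartition _ hP (by simp)
  simp only [Nat.card_eq_fintype_card, Fintype.card_fin] at hgroup
  dsimp only
  omega
end

section
/- In the attention computation DAG with sequence length m and head dimension d, in the large cache regime r ≥ d², every (2r)-edge partition class E_i contains at most O(r²/d) internal edges, and hence MIN_edge(2r) ≥ Ω(m²·d²/r²) and OPT_PRBP ≥ Ω(m²·d²/r). -/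
open scoped Classical

variable {V : Type} [Fintype V] [DecidableEq V]

/-- Nodes of the (matrix-multiplication part of the) attention DAG: entries of
`Q` (`Fin m × Fin d`), entries of `Kᵀ` (`Fin d × Fin m`), internal nodes
(`Fin m × Fin m × Fin d`), root nodes (`Fin m × Fin m`, entries of `Q·Kᵀ`), and
one further node per root for the rest of the computation. -/
abbrev AttNode (m d : ℕ) :=
  (Fin m × Fin d) ⊕ ((Fin d × Fin m) ⊕
    ((Fin m × Fin m × Fin d) ⊕ ((Fin m × Fin m) ⊕ (Fin m × Fin m))))

def AttG (m d : ℕ) : DirGraph (AttNode m d) :=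
  ⟨fun a b =>
    match a, b with
    | .inl q, .inr (.inr (.inl p)) => p.1 = q.1 ∧ p.2.2 = q.2
    | .inr (.inl kt), .inr (.inr (.inl p)) => p.2.2 = kt.1 ∧ p.2.1 = kt.2
    | .inr (.inr (.inl p)), .inr (.inr (.inr (.inl rt))) => rt.1 = p.1 ∧ rt.2 = p.2.1
    | .inr (.inr (.inr (.inl rt))), .inr (.inr (.inr (.inr x))) => x = rt
    | _, _ => False⟩

/-- The internal edges: edges from internal nodes to root nodes. -/
def AttInternalEdges (m d : ℕ) : Set (AttNode m d × AttNode m d) :=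
  {e | ∃ p : Fin m × Fin m × Fin d,
    e = (.inr (.inr (.inl p)), .inr (.inr (.inr (.inl (p.1, p.2.1)))))}


/-!
A class `E` of a `2r`-edge partition has an edge-dominator `D` and an edge-terminal set `T`,
each of size at most `2r`. At most `4r` internal trees meet `D ∪ T`, and they carry at most
`4rd` internal edges. If another tree has an internal edge in `E`, its root is not
edge-terminal, so the root's out-edge lies in `E`; a path from any of the `2d` sources
`Q[x, ·]`, `Kᵀ[·, y]` of the tree through that edge meets `D`, and only at the source. So if
these extra trees lie in `a` rows and `b` columns, then `(a + b) d ≤ 2r`, and by AM–GM there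
are at most `ab ≤ r²/d²` of them. For `r ≥ d²` a class thus holds at most `5r²/d` internal
edges, and the `m²d` internal edges need `5r²k ≥ m²d²`.

The bound on `OPT_PRBP` needs no partition: each of the `m²` output nodes is a sink that is not
a source, so it has to be saved, and `m²d² ≤ r m²`.
-/

theorem mul_mul_sq_le_sq_of_add_mul_le {a b d r : ℕ} (h : (a + b) * d ≤ 2 * r) :
    a * b * d ^ 2 ≤ r ^ 2 := by
  have hamgm := four_mul_le_sq_add a b
  have hsq : ((a + b) * d) ^ 2 ≤ (2 * r) ^ 2 := Nat.pow_le_pow_left h 2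
  nlinarith

theorem Set.ncard_preimage_some_le {α : Type*} [Finite α] (s : Set (Option α)) :
    (Option.some ⁻¹' s).ncard ≤ s.ncard :=
  Set.ncard_le_ncard_of_injOn some (fun _ h => h) (Option.some_injective _).injOn

theorem IsSEdgePartition.ncard_le_sum_ncard_inter {α : Type} [Fintype α] {G : DirGraph α}
    {S k : ℕ} {P : Fin k → Set (α × α)} (hP : IsSEdgePartition G S k P)
    {E₀ : Set (α × α)} (hE₀ : E₀ ⊆ {e | G.E e.1 e.2}) :
    E₀.ncard ≤ ∑ i, (P i ∩ E₀).ncard := by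
  refine (Set.ncard_le_ncard fun e he => ?_).trans (Set.ncard_iUnion_le_of_fintype _)
  obtain ⟨i, hi, -⟩ := hP.2.1 e.1 e.2 (hE₀ he)
  exact Set.mem_iUnion.2 ⟨i, hi, he⟩

section PRBP

variable {α : Type} {G : DirGraph α} {r : ℕ}

theorem PRBPStep.mem_blue [DecidableEq α] {s t : PRBPState α} {mv : PRBPMove α}
    (h : PRBPStep G r s mv t) {v : α} (hv : v ∈ t.blue) : v ∈ s.blue ∨ mv = .save v := by
  cases mv with
  | save w =>
    obtain ⟨-, rfl⟩ := h
    rcases Finset.mem_insert.1 hv with rfl | hv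
    exacts [Or.inr rfl, Or.inl hv]
  | load w => obtain ⟨-, -, rfl⟩ := h; exact Or.inl hv
  | pcompute u w =>
    obtain ⟨-, -, -, -, -, -, rfl⟩ := h
    exact Or.inl (Finset.mem_of_mem_erase hv)
  | delete w => rcases h with ⟨-, rfl⟩ | ⟨-, -, rfl⟩ <;> exact Or.inl hv

theorem PRBPReaches.mem_blue [DecidableEq α] {s t : PRBPState α} {L : List (PRBPMove α)}
    (h : PRBPReaches G r s L t) {v : α} (hv : v ∈ t.blue) :
    v ∈ s.blue ∨ PRBPMove.save v ∈ L := by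
  induction h with
  | nil => exact Or.inl hv
  | cons hstep _ ih =>
    rcases ih hv with hv | hsave
    · rcases hstep.mem_blue hv with hv | rfl
      exacts [Or.inl hv, Or.inr List.mem_cons_self]
    · exact Or.inr (List.mem_cons_of_mem _ hsave)

theorem PRBPValid.save_mem [Fintype α] [DecidableEq α] {L : List (PRBPMove α)}
    (hL : PRBPValid G r L) {v : α} (hsink : G.IsSink v) (hsrc : ¬ G.IsSource v) :
    PRBPMove.save v ∈ L := by
  obtain ⟨t, hreach, hblue, -⟩ := hL
  exact (hreach.mem_blue (hblue v hsink)).resolve_left fun h => hsrc (Finset.mem_filter.1 h).2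

theorem ncard_le_PRBPCost [Finite α] {S : Set α} {L : List (PRBPMove α)}
    (h : ∀ v ∈ S, PRBPMove.save v ∈ L) : S.ncard ≤ PRBPCost L := by
  induction L generalizing S with
  | nil => simp [Set.eq_empty_of_forall_notMem fun v hv => List.not_mem_nil (h v hv)]
  | cons mv L ih =>
    have hcost : PRBPCost (mv :: L) = mv.ioCost + PRBPCost L := by simp [PRBPCost]
    rw [hcost]
    by_cases hsave : ∃ w, mv = .save w
    · obtain ⟨w, rfl⟩ := hsave
      have hrest : ∀ v ∈ S \ {w}, PRBPMove.save v ∈ L := fun v hv =>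
        (List.mem_cons.1 (h v hv.1)).resolve_left fun he => hv.2 (PRBPMove.save.inj he)
      calc S.ncard ≤ (S \ {w}).ncard + ({w} : Set α).ncard :=
            Set.ncard_le_ncard_sdiff_add_ncard _ _
        _ ≤ PRBPCost L + 1 := by rw [Set.ncard_singleton]; exact Nat.add_le_add_right (ih hrest) 1
        _ = _ := by rw [PRBPMove.ioCost, add_comm]
    · refine (ih fun v hv => ?_).trans (Nat.le_add_left _ _)
      exact (List.mem_cons.1 (h v hv)).resolve_left fun he => hsave ⟨v, he.symm⟩

theorem ncard_nonSourceSinks_le_optPRBP [Fintype α] [DecidableEq α] (G : DirGraph α) (r : ℕ) :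
    ({v | G.IsSink v ∧ ¬ G.IsSource v}.ncard : ℕ∞) ≤ optPRBP G r := by
  refine le_sInf ?_
  rintro _ ⟨L, hL, rfl⟩
  exact Nat.cast_le.2 (ncard_le_PRBPCost fun v hv => hL.save_mem hv.1 hv.2)

end PRBP

namespace AttG

variable {m d : ℕ}

abbrev qNode (x : Fin m) (k : Fin d) : AttNode m d := .inl (x, k)
abbrev kNode (k : Fin d) (y : Fin m) : AttNode m d := .inr (.inl (k, y))
abbrev mulNode (x y : Fin m) (k : Fin d) : AttNode m d := .inr (.inr (.inl (x, y, k)))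
abbrev rootNode (x y : Fin m) : AttNode m d := .inr (.inr (.inr (.inl (x, y))))
abbrev outNode (x y : Fin m) : AttNode m d := .inr (.inr (.inr (.inr (x, y))))

theorem isSource_qNode (x : Fin m) (k : Fin d) : (AttG m d).IsSource (qNode x k) := by
  rintro (_ | _ | _ | _ | _) h <;> exact h

theorem isSource_kNode (k : Fin d) (y : Fin m) : (AttG m d).IsSource (kNode k y) := by
  rintro (_ | _ | _ | _ | _) h <;> exact h

theorem isSink_outNode (x y : Fin m) : (AttG m d).IsSink (outNode x y) := by
  rintro (_ | _ | _ | _ | _) h <;> exact h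

theorem not_isSource_outNode (x y : Fin m) : ¬ (AttG m d).IsSource (outNode x y) :=
  fun h => h (rootNode x y) rfl

theorem eq_outNode_of_rootNode_edge {x y : Fin m} {w : AttNode m d}
    (h : (AttG m d).E (rootNode x y) w) : w = outNode x y := by
  rcases w with _ | _ | _ | _ | w
  iterate 4 exact h.elim
  obtain rfl : w = (x, y) := h
  rfl

def internalEdge (p : Fin m × Fin m × Fin d) : AttNode m d × AttNode m d :=
  (mulNode p.1 p.2.1 p.2.2, rootNode p.1 p.2.1)

theorem internalEdge_injective : Function.Injective (internalEdge (m := m) (d := d)) := by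
  intro p q h
  have hmul := congrArg Prod.fst h
  simp only [internalEdge, Sum.inr.injEq, Sum.inl.injEq] at hmul
  exact hmul

theorem ncard_attInternalEdges : (AttInternalEdges m d).ncard = m ^ 2 * d := by
  have hrange : AttInternalEdges m d = Set.range internalEdge := by
    ext e
    exact exists_congr fun p => eq_comm
  rw [hrange, Set.ncard_range_of_injective internalEdge_injective]
  simp [sq, mul_assoc]

/-- Here the internal tree of a root also contains the root's out-neighbour. -/
def treeOf : AttNode m d → Option (Fin m × Fin m)
  | .inr (.inr (.inl p)) => some (p.1, p.2.1)
  | .inr (.inr (.inr (.inl t))) => some t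
  | .inr (.inr (.inr (.inr t))) => some t
  | _ => none

def touchedTrees (S : Set (AttNode m d)) : Set (Fin m × Fin m) :=
  Option.some ⁻¹' (treeOf '' S)

def activeTrees (E₀ : Set (AttNode m d × AttNode m d)) : Set (Fin m × Fin m) :=
  {t | ∃ k, internalEdge (t.1, t.2, k) ∈ E₀}

theorem ncard_touchedTrees_le (S : Set (AttNode m d)) : (touchedTrees S).ncard ≤ S.ncard :=
  (Set.ncard_preimage_some_le _).trans Set.ncard_image_le

theorem ncard_inter_attInternalEdges_le (E₀ : Set (AttNode m d × AttNode m d)) :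
    (E₀ ∩ AttInternalEdges m d).ncard ≤ (activeTrees E₀).ncard * d := by
  calc (E₀ ∩ AttInternalEdges m d).ncard
      ≤ ((fun p : (Fin m × Fin m) × Fin d => internalEdge (p.1.1, p.1.2, p.2)) ''
          (activeTrees E₀ ×ˢ Set.univ)).ncard := by
        refine Set.ncard_le_ncard ?_
        rintro _ ⟨he, p, rfl⟩
        exact ⟨((p.1, p.2.1), p.2.2), ⟨⟨p.2.2, he⟩, trivial⟩, rfl⟩
    _ ≤ (activeTrees E₀ ×ˢ Set.univ).ncard := Set.ncard_image_le
    _ = (activeTrees E₀).ncard * d := by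
        rw [Set.ncard_prod, Set.ncard_univ, Nat.card_eq_fintype_card, Fintype.card_fin]

theorem mem_of_isSource_of_notMem_touchedTrees {E₀ : Set (AttNode m d × AttNode m d)}
    {D : Set (AttNode m d)} (hE₀ : E₀ ⊆ {e | (AttG m d).E e.1 e.2})
    (hD : EdgeDominates (AttG m d) D E₀) {x y : Fin m} (hact : (x, y) ∈ activeTrees E₀)
    (huntouched : (x, y) ∉ touchedTrees (D ∪ edgeTerminalSet E₀)) {s : AttNode m d}
    {k : Fin d} (hs : (AttG m d).IsSource s) (hsk : (AttG m d).E s (mulNode x y k)) : s ∈ D := by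
  have hnot : ∀ v, treeOf v = some (x, y) → v ∉ D ∪ edgeTerminalSet E₀ :=
    fun v hv hmem => huntouched ⟨v, hmem, hv⟩
  have hroot : (rootNode x y, outNode x y) ∈ E₀ := by
    obtain ⟨k₀, hk₀⟩ := hact
    by_contra hno
    refine hnot (rootNode x y) rfl (Or.inr ⟨⟨_, hk₀⟩, fun w hw => hno ?_⟩)
    rwa [← eq_outNode_of_rootNode_edge (hE₀ hw)]
  have hpath : IsSourcePath (AttG m d) [s, mulNode x y k, rootNode x y, outNode x y] :=
    ⟨List.cons_ne_nil _ _,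
      .cons_cons hsk (.cons_cons ⟨rfl, rfl⟩ (.cons_cons rfl (.singleton _))), fun _ => hs⟩
  obtain ⟨v, hvD, hv⟩ := hD _ hpath ⟨_, _, hroot, [s, mulNode x y k], [], rfl⟩
  simp only [List.mem_cons, List.not_mem_nil, or_false] at hv
  rcases hv with rfl | rfl | rfl | rfl
  · exact hvD
  all_goals exact absurd (Or.inl hvD) (hnot _ rfl)

theorem add_mul_le_ncard_of_sources_mem {D : Set (AttNode m d)} {R C : Set (Fin m)}
    (hR : ∀ x ∈ R, ∀ k, qNode x k ∈ D) (hC : ∀ y ∈ C, ∀ k, kNode k y ∈ D) :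
    (R.ncard + C.ncard) * d ≤ D.ncard := by
  set Q : Set (AttNode m d) := Sum.inl '' (R ×ˢ Set.univ)
  set K : Set (AttNode m d) := (Sum.inr ∘ Sum.inl) '' (Set.univ ×ˢ C)
  have hQ : Q.ncard = R.ncard * d := by
    rw [Set.ncard_image_of_injective _ Sum.inl_injective, Set.ncard_prod, Set.ncard_univ,
      Nat.card_eq_fintype_card, Fintype.card_fin]
  have hK : K.ncard = d * C.ncard := by
    rw [Set.ncard_image_of_injective _ (Sum.inr_injective.comp Sum.inl_injective),
      Set.ncard_prod, Set.ncard_univ, Nat.card_eq_fintype_card, Fintype.card_fin]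
  have hdisj : Disjoint Q K := by
    rw [Set.disjoint_left]
    rintro _ ⟨_, -, rfl⟩ ⟨_, -, h⟩
    exact Sum.inl_ne_inr h.symm
  have hsub : Q ∪ K ⊆ D := by
    rintro _ (⟨⟨x, k⟩, ⟨hx, -⟩, rfl⟩ | ⟨⟨k, y⟩, ⟨-, hy⟩, rfl⟩)
    exacts [hR x hx k, hC y hy k]
  calc (R.ncard + C.ncard) * d = Q.ncard + K.ncard := by rw [hQ, hK]; ring
    _ = (Q ∪ K).ncard := (Set.ncard_union_eq hdisj).symm
    _ ≤ D.ncard := Set.ncard_le_ncard hsub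

theorem d_mul_ncard_inter_attInternalEdges_le {r k : ℕ}
    {P : Fin k → Set (AttNode m d × AttNode m d)} (hr : d ^ 2 ≤ r)
    (hP : IsSEdgePartition (AttG m d) (2 * r) k P) (i : Fin k) :
    d * (P i ∩ AttInternalEdges m d).ncard ≤ 5 * r ^ 2 := by
  obtain ⟨D, hDcard, hD⟩ := hP.2.2.2.1 i
  set touched := touchedTrees (D ∪ edgeTerminalSet (P i))
  set extra := activeTrees (P i) \ touched
  have htouched : touched.ncard ≤ 4 * r := by
    have hle : touched.ncard ≤ D.ncard + (edgeTerminalSet (P i)).ncard :=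
      (ncard_touchedTrees_le _).trans (Set.ncard_union_le _ _)
    have := hP.2.2.2.2 i
    omega
  have hsrc : ∀ t ∈ extra, ∀ s k, (AttG m d).IsSource s →
      (AttG m d).E s (mulNode t.1 t.2 k) → s ∈ D :=
    fun t ht _ _ hs hsk => mem_of_isSource_of_notMem_touchedTrees (hP.1 i) hD ht.1 ht.2 hs hsk
  have hrowcol : ((Prod.fst '' extra).ncard + (Prod.snd '' extra).ncard) * d ≤ 2 * r := by
    refine (add_mul_le_ncard_of_sources_mem ?_ ?_).trans hDcard
    · rintro _ ⟨t, ht, rfl⟩ k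
      exact hsrc t ht _ k (isSource_qNode _ _) ⟨rfl, rfl⟩
    · rintro _ ⟨t, ht, rfl⟩ k
      exact hsrc t ht _ k (isSource_kNode _ _) ⟨rfl, rfl⟩
  have hextra : extra.ncard * d ^ 2 ≤ r ^ 2 := by
    refine le_trans (Nat.mul_le_mul_right _ ?_) (mul_mul_sq_le_sq_of_add_mul_le hrowcol)
    rw [← Set.ncard_prod]
    exact Set.ncard_le_ncard fun t ht => ⟨⟨t, ht, rfl⟩, ⟨t, ht, rfl⟩⟩
  have hactive : (activeTrees (P i)).ncard ≤ extra.ncard + touched.ncard :=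
    Set.ncard_le_ncard_sdiff_add_ncard _ _
  calc d * (P i ∩ AttInternalEdges m d).ncard
      ≤ d * ((activeTrees (P i)).ncard * d) :=
        Nat.mul_le_mul_left _ (ncard_inter_attInternalEdges_le _)
    _ ≤ (extra.ncard + touched.ncard) * d ^ 2 := by nlinarith
    _ ≤ r ^ 2 + 4 * r * r := by nlinarith
    _ = 5 * r ^ 2 := by ring

theorem sq_mul_sq_le_of_isSEdgePartition {r k : ℕ}
    {P : Fin k → Set (AttNode m d × AttNode m d)} (hr : d ^ 2 ≤ r)
    (hP : IsSEdgePartition (AttG m d) (2 * r) k P) :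
    m ^ 2 * d ^ 2 ≤ 5 * r ^ 2 * k := by
  have hedges : AttInternalEdges m d ⊆ {e | (AttG m d).E e.1 e.2} := by
    rintro _ ⟨p, rfl⟩
    exact ⟨rfl, rfl⟩
  calc m ^ 2 * d ^ 2 = d * (AttInternalEdges m d).ncard := by rw [ncard_attInternalEdges]; ring
    _ ≤ d * ∑ i, (P i ∩ AttInternalEdges m d).ncard :=
        Nat.mul_le_mul_left _ (hP.ncard_le_sum_ncard_inter hedges)
    _ = ∑ i, d * (P i ∩ AttInternalEdges m d).ncard := Finset.mul_sum _ _ _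
    _ ≤ ∑ _i : Fin k, 5 * r ^ 2 :=
        Finset.sum_le_sum fun i _ => d_mul_ncard_inter_attInternalEdges_le hr hP i
    _ = 5 * r ^ 2 * k := by simp [mul_comm]

theorem sq_le_optPRBP (m d r : ℕ) : ((m ^ 2 : ℕ) : ℕ∞) ≤ optPRBP (AttG m d) r := by
  refine le_trans (Nat.cast_le.2 ?_) (ncard_nonSourceSinks_le_optPRBP _ r)
  have hinj : Function.Injective fun t : Fin m × Fin m => (outNode t.1 t.2 : AttNode m d) :=
    fun a b h => by simpa using h
  calc m ^ 2 = (Set.range fun t : Fin m × Fin m => (outNode t.1 t.2 : AttNode m d)).ncard := by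
        rw [Set.ncard_range_of_injective hinj]; simp [sq]
    _ ≤ _ := Set.ncard_le_ncard (by
        rintro _ ⟨t, rfl⟩
        exact ⟨isSink_outNode _ _, not_isSource_outNode _ _⟩)

end AttG

/-- in the large cache regime `r ≥ d²`, every class of a
`(2r)`-edge partition of the attention DAG contains at most `O(r²/d)` internal
edges; hence `MIN_edge(2r) ≥ Ω(m²d²/r²)` and `OPT_PRBP ≥ Ω(m²d²/r)`. -/
theorem attention_lower_bound :
    ∃ c : ℕ, 0 < c ∧ ∀ m d r : ℕ, 1 ≤ d → d ^ 2 ≤ r →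
      (∀ (k : ℕ) (P : Fin k → Set (AttNode m d × AttNode m d)),
        IsSEdgePartition (AttG m d) (2 * r) k P →
          (∀ i, d * ((P i) ∩ AttInternalEdges m d).ncard ≤ c * r ^ 2) ∧
          m ^ 2 * d ^ 2 ≤ c * r ^ 2 * k) ∧
      ((m ^ 2 * d ^ 2 : ℕ) : ℕ∞) ≤ ((c * r : ℕ) : ℕ∞) * optPRBP (AttG m d) r := by
  refine ⟨5, by norm_num, fun m d r _ hr => ⟨fun k P hP =>
    ⟨AttG.d_mul_ncard_inter_attInternalEdges_le hr hP,
      AttG.sq_mul_sq_le_of_isSEdgePartition hr hP⟩, ?_⟩⟩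
  calc ((m ^ 2 * d ^ 2 : ℕ) : ℕ∞) ≤ ((5 * r * m ^ 2 : ℕ) : ℕ∞) := by
        rw [Nat.cast_le]; nlinarith
    _ = ((5 * r : ℕ) : ℕ∞) * ((m ^ 2 : ℕ) : ℕ∞) := by push_cast; ring
    _ ≤ ((5 * r : ℕ) : ℕ∞) * optPRBP (AttG m d) r := by
        gcongr
        exact AttG.sq_le_optPRBP m d r
end
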